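/- arXiv:0809.1252 — 6 statements merged into one kernel-verified Lean document; each statement's English description precedes it below -/
import Mathlib

section
/- Let (w_k)_{k≥1} be a strictly increasing sequence of nonnegative real numbers that is not too dense, and let (N_k)_{k≥1} be positive integers. Set C = limsup_{k→∞} (ln N_k)/w_k and assume C < ∞. Then for every real number s with s > C, the series ∑_{k=1}^∞ N_k · e^{−w_k·s} converges. -/
open Real Filter Asymptotics

lemma summable_exp_neg_mul_rpow {δ p : ℝ} (hδ : 0 < δ) (hp : 0 < p) :
    Summable fun k : ℕ => Real.exp (-δ * (k : ℝ) ^ p) := by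
  have h2 : Summable fun k : ℕ => 1 / ((k : ℝ) ^ 2) :=
    summable_one_div_nat_pow.mpr one_lt_two
  refine summable_of_isBigO_nat h2 ?_
  rw [isBigO_iff]
  refine ⟨1, ?_⟩
  have ht : Tendsto (fun x : ℝ => (x ^ p) ^ (2 / p) * Real.exp (-δ * x ^ p)) atTop (nhds 0) :=
    (tendsto_rpow_mul_exp_neg_mul_atTop_nhds_zero (2 / p) δ hδ).comp (tendsto_rpow_atTop hp)
  have ht' : Tendsto (fun x : ℝ => x ^ (2 : ℝ) * Real.exp (-δ * x ^ p)) atTop (nhds 0) := by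
    refine ht.congr' ?_
    filter_upwards [eventually_ge_atTop (0 : ℝ)] with x hx
    rw [← Real.rpow_mul hx, mul_div_cancel₀ _ hp.ne']
  have htn : Tendsto (fun k : ℕ => (k : ℝ) ^ (2 : ℝ) * Real.exp (-δ * (k : ℝ) ^ p)) atTop (nhds 0) :=
    ht'.comp tendsto_natCast_atTop_atTop
  have hev : ∀ᶠ k : ℕ in atTop, (k : ℝ) ^ (2 : ℝ) * Real.exp (-δ * (k : ℝ) ^ p) ≤ 1 := by
    filter_upwards [htn.eventually (eventually_le_nhds (show (0:ℝ) < 1 by norm_num))] with k hk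
    exact hk
  filter_upwards [hev, eventually_ge_atTop 1] with k hk hk1
  have hk0 : (0 : ℝ) < (k : ℝ) := by exact_mod_cast hk1
  rw [Real.norm_eq_abs, Real.norm_eq_abs, abs_of_nonneg (Real.exp_pos _).le,
    abs_of_nonneg (by positivity), one_mul]
  rw [le_div_iff₀ (by positivity)]
  calc Real.exp (-δ * (k:ℝ) ^ p) * (k:ℝ) ^ 2
      = (k:ℝ) ^ (2:ℝ) * Real.exp (-δ * (k:ℝ) ^ p) := by
        rw [mul_comm]; congr 1; rw [← Real.rpow_natCast]; norm_num
    _ ≤ 1 := hk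

/-- A sequence `a` of real numbers is *not too dense* if there exist constants
`L ≥ 0` and `K ≥ 0` such that for every natural number `n`, the number of
indices `k` with `a k < n` is at most `L * n ^ K`. -/
def NotTooDense (a : ℕ → ℝ) : Prop :=
  ∃ L K : ℝ, 0 ≤ L ∧ 0 ≤ K ∧ ∀ k n : ℕ, a k < n → (k + 1 : ℝ) ≤ L * (n : ℝ) ^ K

set_option maxHeartbeats 1000000 in
/-- Let `(w_k)` be a strictly increasing, not too dense sequence of nonnegative
reals and `(N_k)` positive integers.  If the combinatorial capacity
`C = limsup_k (ln N_k) / w_k` (computed in `EReal`) is finite (`C < ⊤`), then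
for every real `s > C` the generating-function series `∑ₖ N_k · e^(−w_k s)`
converges. -/
theorem generatingFunction_summable_of_gt_capacity
    (w : ℕ → ℝ) (hw : StrictMono w) (hw0 : ∀ k, 0 ≤ w k) (hd : NotTooDense w)
    (N : ℕ → ℕ) (hN : ∀ k, 0 < N k)
    (C : EReal)
    (hC : C = Filter.limsup (fun k => ((Real.log (N k) / w k : ℝ) : EReal)) Filter.atTop)
    (hCfin : C < ⊤)
    (s : ℝ) (hs : C < (s : EReal)) :
    Summable (fun k => (N k : ℝ) * Real.exp (-(w k) * s)) := by
  obtain ⟨L, K, hL0, hK0, hcount⟩ := hd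
  set L' : ℝ := max L 1 with hL'def
  set K' : ℝ := max K 1 with hK'def
  have hL1 : (1 : ℝ) ≤ L' := le_max_right _ _
  have hK1 : (1 : ℝ) ≤ K' := le_max_right _ _
  have hL'pos : (0 : ℝ) < L' := by linarith
  have hK'pos : (0 : ℝ) < K' := by linarith
  -- counting bound with nicer constants
  have hwlb : ∀ k : ℕ, ((k : ℝ) + 1) / L' ≤ (w k + 1) ^ K' := by
    intro k
    set n : ℕ := ⌊w k⌋₊ + 1 with hn
    have hwn : w k < n := by
      have := Nat.lt_floor_add_one (w k)
      push_cast [hn]; linarith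
    have hn1 : (1 : ℝ) ≤ (n : ℝ) := by exact_mod_cast Nat.one_le_iff_ne_zero.mpr (by omega)
    have hnle : (n : ℝ) ≤ w k + 1 := by
      have := Nat.floor_le (hw0 k)
      push_cast [hn]; linarith
    have h1 : ((k : ℝ) + 1) ≤ L * (n : ℝ) ^ K := by exact_mod_cast hcount k n hwn
    have h2 : (n : ℝ) ^ K ≤ (n : ℝ) ^ K' :=
      Real.rpow_le_rpow_of_exponent_le hn1 (le_max_left _ _)
    have h3 : (n : ℝ) ^ K' ≤ (w k + 1) ^ K' :=
      Real.rpow_le_rpow (by linarith) hnle hK'pos.le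
    have h4 : L * (n : ℝ) ^ K ≤ L' * (w k + 1) ^ K' := by
      have hnK : (0:ℝ) ≤ (n:ℝ) ^ K := Real.rpow_nonneg (by linarith) _
      calc L * (n:ℝ) ^ K ≤ L' * (n:ℝ) ^ K :=
            mul_le_mul_of_nonneg_right (le_max_left _ _) hnK
        _ ≤ L' * (w k + 1) ^ K' := by
            exact mul_le_mul_of_nonneg_left (h2.trans h3) hL'pos.le
    rw [div_le_iff₀ hL'pos]
    calc ((k:ℝ) + 1) ≤ L * (n:ℝ) ^ K := h1
      _ ≤ L' * (w k + 1) ^ K' := h4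
      _ = (w k + 1) ^ K' * L' := mul_comm _ _
  set p : ℝ := 1 / K' with hpdef
  have hp : 0 < p := by positivity
  set Lp : ℝ := L' ^ p with hLpdef
  have hLp : 0 < Lp := Real.rpow_pos_of_pos hL'pos _
  have hlb : ∀ k : ℕ, (k : ℝ) ^ p / Lp - 1 ≤ w k := by
    intro k
    have h0 : (0:ℝ) ≤ ((k:ℝ) + 1) / L' := by positivity
    have h1 : (((k:ℝ) + 1) / L') ^ p ≤ ((w k + 1) ^ K') ^ p :=
      Real.rpow_le_rpow h0 (hwlb k) hp.le
    have h2 : ((w k + 1) ^ K') ^ p = w k + 1 := by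
      rw [← Real.rpow_mul (by linarith [hw0 k]), hpdef, mul_one_div,
        div_self hK'pos.ne', Real.rpow_one]
    have h3 : (((k:ℝ) + 1) / L') ^ p = ((k:ℝ) + 1) ^ p / Lp := by
      rw [Real.div_rpow (by positivity) hL'pos.le]
    have h4 : (k : ℝ) ^ p ≤ ((k:ℝ) + 1) ^ p :=
      Real.rpow_le_rpow (Nat.cast_nonneg k) (by linarith) hp.le
    have h5 : (k : ℝ) ^ p / Lp ≤ ((k:ℝ) + 1) ^ p / Lp := by gcongr
    rw [h3, h2] at h1
    linarith
  -- choose a real c strictly between C and s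
  obtain ⟨c', hc1, hc2⟩ := exists_between hs
  have hc'bot : c' ≠ ⊥ := ne_bot_of_gt hc1
  have hc'top : c' ≠ ⊤ := (hc2.trans (EReal.coe_lt_top s)).ne
  lift c' to ℝ using ⟨hc'top, hc'bot⟩ with c
  have hcs : c < s := by exact_mod_cast hc2
  have hε : 0 < s - c := by linarith
  have hδ : 0 < (s - c) / Lp := by positivity
  -- the comparison series
  have hg : Summable (fun k : ℕ => Real.exp (-(s - c) * w k)) := by
    refine Summable.of_nonneg_of_le (fun k => (Real.exp_pos _).le) (fun k => ?_)
      ((summable_exp_neg_mul_rpow hδ hp).mul_left (Real.exp (s - c)))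
    rw [← Real.exp_add]
    refine Real.exp_le_exp.mpr ?_
    have h1 := hlb k
    have h2 : (s - c) * ((k:ℝ) ^ p / Lp - 1) ≤ (s - c) * w k :=
      mul_le_mul_of_nonneg_left h1 hε.le
    have h3 : (s - c) / Lp * (k:ℝ) ^ p = (s - c) * ((k:ℝ) ^ p / Lp) := by ring
    linarith
  -- eventual bound on N k
  have hev : ∀ᶠ k : ℕ in atTop, Real.log (N k) / w k < c := by
    have hls : Filter.limsup (fun k => ((Real.log (N k) / w k : ℝ) : EReal)) Filter.atTop
        < (c : EReal) := hC ▸ hc1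
    have := Filter.eventually_lt_of_limsup_lt hls
    filter_upwards [this] with k hk
    exact_mod_cast hk
  obtain ⟨M, hM⟩ := eventually_atTop.mp hev
  refine (summable_nat_add_iff (M + 1)).1 ?_
  have hg' : Summable (fun n : ℕ => Real.exp (-(s - c) * w (n + (M + 1)))) :=
    (summable_nat_add_iff (M + 1)).2 hg
  refine Summable.of_nonneg_of_le (fun n => by positivity) (fun n => ?_) hg'
  set k : ℕ := n + (M + 1) with hkdef
  have hwk : 0 < w k := by
    have := hw (Nat.zero_lt_succ (n + M))
    have h0 := hw0 0
    calc (0:ℝ) ≤ w 0 := h0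
      _ < w (n + M + 1) := this
      _ = w k := by rw [hkdef]; ring_nf
  have hlog : Real.log (N k) < c * w k := by
    have := hM k (by omega)
    rw [div_lt_iff₀ hwk] at this
    linarith
  have hNk : (N k : ℝ) ≤ Real.exp (c * w k) := by
    have hNpos : (0:ℝ) < (N k : ℝ) := by exact_mod_cast hN k
    calc (N k : ℝ) = Real.exp (Real.log (N k)) := (Real.exp_log hNpos).symm
      _ ≤ Real.exp (c * w k) := Real.exp_le_exp.mpr hlog.le
  calc (N k : ℝ) * Real.exp (-(w k) * s)
      ≤ Real.exp (c * w k) * Real.exp (-(w k) * s) :=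
        mul_le_mul_of_nonneg_right hNk (Real.exp_pos _).le
    _ = Real.exp (-(s - c) * w k) := by rw [← Real.exp_add]; congr 1; ring
end

section
/- Let S be a nonempty finite set, w : S → ℝ a weight function, and R a real number satisfying ∑_{x∈S} e^{−w(x)·R} = 1. Then for every probability mass function p on S, the entropy satisfies H(p) ≤ R · ∑_{x∈S} p(x)·w(x). -/
lemma gibbs_pointwise (p q : ℝ) (hp : 0 ≤ p) (hq : 0 < q) :
    p * Real.log q - p * Real.log p ≤ q - p := by
  rcases eq_or_lt_of_le hp with h | h
  · simp [← h, hq.le]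
  · have h1 : Real.log (q / p) ≤ q / p - 1 :=
      Real.log_le_sub_one_of_pos (div_pos hq h)
    have h2 : Real.log (q / p) = Real.log q - Real.log p :=
      Real.log_div hq.ne' h.ne'
    have := mul_le_mul_of_nonneg_left h1 h.le
    rw [h2] at this
    calc p * Real.log q - p * Real.log p = p * (Real.log q - Real.log p) := by ring
    _ ≤ p * (q / p - 1) := this
    _ = q - p := by field_simp

/-- Let `S` be a nonempty finite set, `w : S → ℝ` a weight function, and `R` a
real number with `∑_{x∈S} e^(−w(x)·R) = 1` (a characteristic root).  Then for
every probability mass function `p` on `S`, the entropy in nats satisfies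
`H(p) = −∑ₓ p(x) ln p(x) ≤ R · ∑ₓ p(x) w(x)`.
(Note `Real.log 0 = 0` in Mathlib, so the convention `0 · ln 0 = 0` holds.) -/
theorem entropy_le_charRoot_mul_avgWeight
    (S : Type) [Fintype S] [Nonempty S]
    (w : S → ℝ) (R : ℝ)
    (hR : ∑ x : S, Real.exp (-(w x) * R) = 1)
    (p : S → ℝ) (hp0 : ∀ x, 0 ≤ p x) (hp1 : ∑ x : S, p x = 1) :
    -∑ x : S, p x * Real.log (p x) ≤ R * ∑ x : S, p x * w x := by
  have key : ∑ x : S, (p x * Real.log (Real.exp (-(w x) * R)) - p x * Real.log (p x))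
      ≤ ∑ x : S, (Real.exp (-(w x) * R) - p x) :=
    Finset.sum_le_sum fun x _ => gibbs_pointwise _ _ (hp0 x) (Real.exp_pos _)
  rw [Finset.sum_sub_distrib, Finset.sum_sub_distrib, hR, hp1, sub_self] at key
  simp only [Real.log_exp] at key
  have : ∑ x : S, p x * (-(w x) * R) = -(R * ∑ x : S, p x * w x) := by
    rw [Finset.mul_sum, ← Finset.sum_neg_distrib]
    exact Finset.sum_congr rfl fun x _ => by ring
  rw [this] at key
  linarith
end

section
/- Let S be a finite set with at least two elements and let w : S → ℝ satisfy w(x) > 0 for every x ∈ S. Let R > 0 be the unique positive real number with ∑_{x∈S} e^{−w(x)·R} = 1. Then the supremum over all probability mass functions p on S of the ratio H(p) / (∑_{x∈S} p(x)·w(x)) equals R, and it is attained exactly at the PMF q(x) = e^{−w(x)·R}. -/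
/-- Per-term Gibbs inequality: for `a ≥ 0`, `b > 0`,
`a * log b - a * log a ≤ b - a`, with equality iff `a = b`. -/
lemma gibbs_term {a b : ℝ} (ha : 0 ≤ a) (hb : 0 < b) :
    a * Real.log b - a * Real.log a ≤ b - a ∧
      (a * Real.log b - a * Real.log a = b - a ↔ a = b) := by
  rcases eq_or_lt_of_le ha with h0 | h0
  · constructor
    · simp [← h0]; linarith
    · constructor
      · intro h; simp [← h0] at h ⊢; linarith
      · intro h; exact absurd (h0 ▸ h ▸ hb) (lt_irrefl _)
  · have hba : 0 < b / a := div_pos hb h0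
    have hlog : Real.log (b / a) ≤ b / a - 1 := Real.log_le_sub_one_of_pos hba
    have hlogd : Real.log (b / a) = Real.log b - Real.log a :=
      Real.log_div hb.ne' h0.ne'
    constructor
    · have := mul_le_mul_of_nonneg_left hlog h0.le
      rw [hlogd] at this
      have h2 : a * (b / a - 1) = b - a := by field_simp
      nlinarith
    · constructor
      · intro h
        by_contra hne
        have hba1 : b / a ≠ 1 := by
          intro h1
          exact hne ((div_eq_one_iff_eq h0.ne').mp h1).symm
        have hstrict : Real.log (b / a) < b / a - 1 :=
          Real.log_lt_sub_one_of_pos hba hba1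
        have := mul_lt_mul_of_pos_left hstrict h0
        rw [hlogd] at this
        have h2 : a * (b / a - 1) = b - a := by field_simp
        nlinarith
      · intro h; subst h; simp

/-- Let `S` be a finite set with at least two elements, `w : S → ℝ` with
`w x > 0` for all `x`, and `R > 0` the unique positive real with
`∑_{x∈S} e^(−w(x)·R) = 1`.  Then the supremum over all probability mass
functions `p` on `S` of the ratio `H(p) / ∑ₓ p(x) w(x)` equals `R` (it is the
greatest attained value), and it is attained exactly at `q(x) = e^(−w(x)·R)`. -/
theorem charRoot_is_max_entropy_per_avgWeight
    (S : Type) [Fintype S] (hcard : 2 ≤ Fintype.card S)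
    (w : S → ℝ) (hw : ∀ x, 0 < w x)
    (R : ℝ) (hRpos : 0 < R)
    (hR : ∑ x : S, Real.exp (-(w x) * R) = 1) :
    IsGreatest
      {r : ℝ | ∃ p : S → ℝ, (∀ x, 0 ≤ p x) ∧ (∑ x : S, p x = 1) ∧
        r = (-∑ x : S, p x * Real.log (p x)) / (∑ x : S, p x * w x)} R ∧
    ∀ p : S → ℝ, (∀ x, 0 ≤ p x) → (∑ x : S, p x = 1) →
      ((-∑ x : S, p x * Real.log (p x)) / (∑ x : S, p x * w x) = R ↔
        ∀ x, p x = Real.exp (-(w x) * R)) := by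
  set q : S → ℝ := fun x => Real.exp (-(w x) * R) with hq
  have hqpos : ∀ x, 0 < q x := fun x => Real.exp_pos _
  have hlogq : ∀ x, Real.log (q x) = -(w x) * R := fun x => Real.log_exp _
  -- average weight positive for any pmf
  have havg : ∀ p : S → ℝ, (∀ x, 0 ≤ p x) → (∑ x : S, p x = 1) →
      0 < ∑ x : S, p x * w x := by
    intro p hp0 hp1
    have hsum : 0 ≤ ∑ x : S, p x * w x :=
      Finset.sum_nonneg fun x _ => mul_nonneg (hp0 x) (hw x).le
    rcases hsum.eq_or_lt with h | h
    · exfalso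
      have : ∀ x ∈ Finset.univ, p x * w x = 0 :=
        (Finset.sum_eq_zero_iff_of_nonneg
          (fun x _ => mul_nonneg (hp0 x) (hw x).le)).mp h.symm
      have hp : ∀ x : S, p x = 0 := by
        intro x
        rcases mul_eq_zero.mp (this x (Finset.mem_univ x)) with h' | h'
        · exact h'
        · exact absurd h' (hw x).ne'
      simp [hp] at hp1
    · exact h
  -- key inequality and equality characterization
  have key : ∀ p : S → ℝ, (∀ x, 0 ≤ p x) → (∑ x : S, p x = 1) →
      (-∑ x : S, p x * Real.log (p x)) ≤ R * ∑ x : S, p x * w x ∧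
      ((-∑ x : S, p x * Real.log (p x)) = R * ∑ x : S, p x * w x ↔
        ∀ x, p x = q x) := by
    intro p hp0 hp1
    set g : S → ℝ := fun x =>
      (q x - p x) - (p x * Real.log (q x) - p x * Real.log (p x)) with hgdef
    have hg0 : ∀ x, 0 ≤ g x := fun x =>
      sub_nonneg.mpr (gibbs_term (hp0 x) (hqpos x)).1
    have hgsum : ∑ x : S, g x =
        (∑ x : S, p x * Real.log (p x)) + R * ∑ x : S, p x * w x := by
      have : ∀ x : S, g x = (q x - p x) + p x * w x * R + p x * Real.log (p x) := by
        intro x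
        simp only [hgdef, hlogq x]
        ring
      rw [Finset.sum_congr rfl (fun x _ => this x)]
      rw [Finset.sum_add_distrib, Finset.sum_add_distrib, Finset.sum_sub_distrib]
      rw [hR, hp1]
      have h2 : ∑ x : S, p x * w x * R = R * ∑ x : S, p x * w x := by
        rw [Finset.mul_sum]
        exact Finset.sum_congr rfl fun x _ => by ring
      rw [h2]; ring
    have hsumg0 : 0 ≤ ∑ x : S, g x :=
      Finset.sum_nonneg fun x _ => hg0 x
    constructor
    · linarith [hgsum ▸ hsumg0]
    · constructor
      · intro h
        have hsg : ∑ x : S, g x = 0 := by rw [hgsum]; linarith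
        have := (Finset.sum_eq_zero_iff_of_nonneg (fun x _ => hg0 x)).mp hsg
        intro x
        have hx : g x = 0 := this x (Finset.mem_univ x)
        have : p x * Real.log (q x) - p x * Real.log (p x) = q x - p x := by
          simp only [hgdef] at hx; linarith
        exact (gibbs_term (hp0 x) (hqpos x)).2.mp this
      · intro h
        have hterm : ∀ x : S, p x * Real.log (p x) = -(p x * w x * R) := by
          intro x; rw [h x, hlogq x]; ring
        rw [Finset.sum_congr rfl (fun x _ => hterm x)]
        rw [Finset.sum_neg_distrib, neg_neg, Finset.mul_sum]
        exact Finset.sum_congr rfl fun x _ => by ring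
  have hiff : ∀ p : S → ℝ, (∀ x, 0 ≤ p x) → (∑ x : S, p x = 1) →
      ((-∑ x : S, p x * Real.log (p x)) / (∑ x : S, p x * w x) = R ↔
        ∀ x, p x = q x) := by
    intro p hp0 hp1
    have hpos := havg p hp0 hp1
    rw [div_eq_iff hpos.ne', ← (key p hp0 hp1).2]
  refine ⟨⟨⟨q, fun x => (hqpos x).le, hR, ?_⟩, ?_⟩, hiff⟩
  · exact ((hiff q (fun x => (hqpos x).le) hR).mpr (fun _ => rfl)).symm
  · rintro r ⟨p, hp0, hp1, rfl⟩
    have hpos := havg p hp0 hp1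
    rw [div_le_iff₀ hpos]
    linarith [(key p hp0 hp1).1]
end

section
/- Let (v_l)_{l≥1} be a strictly increasing sequence of nonnegative real numbers that is not too dense. For each l, let S_l be a nonempty finite set with weight function w_l : S_l → ℝ satisfying w_l(x) ≥ v_l for every x ∈ S_l, and let R_l be a real number satisfying ∑_{x∈S_l} e^{−w_l(x)·R_l} = 1. Assume α := limsup_{l→∞} R_l is finite. Then for every real number s with s > α, the double series ∑_{l=1}^∞ ∑_{x∈S_l} e^{−w_l(x)·s} converges. -/
private lemma pow_div_factorial_le_exp {x : ℝ} (hx : 0 ≤ x) (m : ℕ) :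
    x ^ m / m.factorial ≤ Real.exp x := by
  have h1 : x ^ m / m.factorial ≤ ∑ i ∈ Finset.range (m + 1), x ^ i / i.factorial := by
    refine Finset.single_le_sum (f := fun i => x ^ i / (i.factorial : ℝ)) ?_
      (Finset.self_mem_range_succ m)
    intro i _
    positivity
  exact h1.trans (Real.sum_le_exp_of_nonneg hx (m + 1))

private lemma aux_summable (v : ℕ → ℝ) (hv0 : ∀ l, 0 ≤ v l) (L K : ℝ) (hL : 0 < L)
    (hK : 0 ≤ K) (hLK : ∀ k n : ℕ, v k < n → (k + 1 : ℝ) ≤ L * (n : ℝ) ^ K)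
    (ε : ℝ) (hε : 0 < ε) :
    Summable (fun l => Real.exp (-(v l) * ε)) := by
  set m : ℕ := ⌈2 * K⌉₊ with hm
  have hKm : 2 * K ≤ (m : ℝ) := Nat.le_ceil _
  set C : ℝ := L ^ 2 * (2 ^ (2 * K) * ((m.factorial : ℝ) / ε ^ m)) with hC
  -- summable comparison sequence
  have hg : Summable (fun l : ℕ => 1 / ((l : ℝ) + 1) ^ 2) := by
    have := (summable_nat_add_iff 1).mpr ((Real.summable_one_div_nat_pow (p := 2)).mpr (by norm_num))
    refine this.congr fun n => ?_
    push_cast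
    ring_nf
  -- eventually `1 ≤ v l`
  have hev : ∀ᶠ l in Filter.atTop, 1 ≤ v l := by
    rw [Filter.eventually_atTop]
    refine ⟨⌈L⌉₊, fun l hl => ?_⟩
    by_contra hvl
    push_neg at hvl
    have h1 : v l < ((1 : ℕ) : ℝ) := by simpa using hvl
    have h2 := hLK l 1 h1
    simp only [Nat.cast_one, Real.one_rpow, mul_one] at h2
    have h3 : (⌈L⌉₊ : ℝ) ≤ (l : ℝ) := Nat.cast_le.mpr hl
    have h4 : L ≤ (⌈L⌉₊ : ℝ) := Nat.le_ceil L
    linarith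
  refine summable_of_isBigO_nat hg ?_
  rw [Asymptotics.isBigO_iff]
  refine ⟨C, ?_⟩
  filter_upwards [hev] with l hvl
  set x := v l with hx
  have hx0 : (0 : ℝ) ≤ x := hv0 l
  have hxb : (0 : ℝ) ≤ x + 1 := by linarith
  -- key inequality : ((l:ℝ)+1)^2 ≤ C * exp (x * ε)
  have h1 : ((l : ℝ) + 1) ≤ L * (x + 1) ^ K := by
    have hfl : v l < ((⌊v l⌋₊ + 1 : ℕ) : ℝ) := by
      push_cast
      exact Nat.lt_floor_add_one _
    have h2 := hLK l (⌊v l⌋₊ + 1) hfl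
    refine h2.trans ?_
    have hbase : ((⌊v l⌋₊ + 1 : ℕ) : ℝ) ≤ x + 1 := by
      push_cast
      have := Nat.floor_le (hv0 l)
      linarith
    exact mul_le_mul_of_nonneg_left (Real.rpow_le_rpow (by positivity) hbase hK) hL.le
  have h2 : ((l : ℝ) + 1) ^ 2 ≤ L ^ 2 * (x + 1) ^ (2 * K) := by
    have hsq : ((l : ℝ) + 1) ^ 2 ≤ (L * (x + 1) ^ K) ^ 2 := by
      have h0 : (0 : ℝ) ≤ (l : ℝ) + 1 := by positivity
      nlinarith
    refine hsq.trans_eq ?_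
    rw [mul_pow, mul_comm 2 K, Real.rpow_mul hxb]
    congr 1
    rw [← Real.rpow_natCast ((x + 1) ^ K) 2]
    norm_num
  have h3 : (x + 1) ^ (2 * K) ≤ 2 ^ (2 * K) * x ^ (2 * K) := by
    have hle : x + 1 ≤ 2 * x := by linarith
    calc (x + 1) ^ (2 * K) ≤ (2 * x) ^ (2 * K) :=
          Real.rpow_le_rpow hxb hle (by positivity)
      _ = 2 ^ (2 * K) * x ^ (2 * K) := Real.mul_rpow (by norm_num) hx0
  have h4 : x ^ (2 * K) ≤ x ^ m := by
    calc x ^ (2 * K) ≤ x ^ (m : ℝ) := Real.rpow_le_rpow_of_exponent_le hvl hKm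
      _ = x ^ m := Real.rpow_natCast x m
  have h5 : x ^ m ≤ Real.exp (x * ε) * (m.factorial : ℝ) / ε ^ m := by
    have h6 : (x * ε) ^ m / (m.factorial : ℝ) ≤ Real.exp (x * ε) :=
      pow_div_factorial_le_exp (by positivity) m
    rw [le_div_iff₀ (by positivity : (0:ℝ) < ε ^ m)]
    rw [div_le_iff₀ (by positivity : (0:ℝ) < (m.factorial : ℝ))] at h6
    calc x ^ m * ε ^ m = (x * ε) ^ m := (mul_pow x ε m).symm
      _ ≤ Real.exp (x * ε) * (m.factorial : ℝ) := h6
  have key : ((l : ℝ) + 1) ^ 2 ≤ C * Real.exp (x * ε) := by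
    have t1 : (0 : ℝ) ≤ L ^ 2 := by positivity
    have t2 : (0 : ℝ) ≤ 2 ^ (2 * K) := by positivity
    calc ((l : ℝ) + 1) ^ 2 ≤ L ^ 2 * (x + 1) ^ (2 * K) := h2
      _ ≤ L ^ 2 * (2 ^ (2 * K) * x ^ (2 * K)) := by
          exact mul_le_mul_of_nonneg_left h3 t1
      _ ≤ L ^ 2 * (2 ^ (2 * K) * x ^ m) := by
          exact mul_le_mul_of_nonneg_left (mul_le_mul_of_nonneg_left h4 t2) t1
      _ ≤ L ^ 2 * (2 ^ (2 * K) * (Real.exp (x * ε) * (m.factorial : ℝ) / ε ^ m)) := by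
          exact mul_le_mul_of_nonneg_left (mul_le_mul_of_nonneg_left h5 t2) t1
      _ = C * Real.exp (x * ε) := by rw [hC]; ring
  have hgpos : (0 : ℝ) < 1 / ((l : ℝ) + 1) ^ 2 := by positivity
  rw [Real.norm_eq_abs, Real.norm_eq_abs, abs_of_pos (Real.exp_pos _), abs_of_pos hgpos,
    neg_mul, Real.exp_neg, mul_one_div, ← one_div,
    div_le_div_iff₀ (Real.exp_pos _) (by positivity), one_mul]
  exact key

/-- Let `(v_l)` be a strictly increasing, not too dense sequence of nonnegative
reals.  For each `l`, let `S l` be a nonempty finite set with weights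
`w l x ≥ v l`, and let `R l` be the characteristic root of level `l`, i.e.
`∑_{x ∈ S l} e^(−w l x · R l) = 1`.  If `α = limsup R l` (in `EReal`) is finite,
then for every real `s > α` the double series `∑_l ∑_{x ∈ S l} e^(−w l x · s)`
converges. -/
theorem doubleSeries_summable_of_gt_limsup_charRoot
    (v : ℕ → ℝ) (hv : StrictMono v) (hv0 : ∀ l, 0 ≤ v l) (hvd : NotTooDense v)
    (S : ℕ → Type) [∀ l, Fintype (S l)] [∀ l, Nonempty (S l)]
    (w : ∀ l, S l → ℝ) (hw : ∀ l (x : S l), v l ≤ w l x)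
    (R : ℕ → ℝ) (hR : ∀ l, ∑ x : S l, Real.exp (-(w l x) * R l) = 1)
    (α : EReal) (hα : α = Filter.limsup (fun l => ((R l : ℝ) : EReal)) Filter.atTop)
    (hαtop : α ≠ ⊤) (hαbot : α ≠ ⊥)
    (s : ℝ) (hs : α < (s : EReal)) :
    Summable (fun l => ∑ x : S l, Real.exp (-(w l x) * s)) := by
  obtain ⟨L, K, hL0, hK0, hLK⟩ := hvd
  have hL : 0 < L := by
    have h1 : v 0 < ((⌊v 0⌋₊ + 1 : ℕ) : ℝ) := by push_cast; exact Nat.lt_floor_add_one _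
    have h2 := hLK 0 (⌊v 0⌋₊ + 1) h1
    have h3 : (0 : ℝ) ≤ (( ⌊v 0⌋₊ + 1 : ℕ) : ℝ) ^ K := Real.rpow_nonneg (by positivity) K
    nlinarith
  set a : ℝ := α.toReal with ha
  have hacoe : (a : EReal) = α := EReal.coe_toReal hαtop hαbot
  have has : a < s := by
    rw [← EReal.coe_lt_coe_iff, hacoe]; exact hs
  set t : ℝ := (a + s) / 2 with ht
  have hat : a < t := by rw [ht]; linarith
  have hts : t < s := by rw [ht]; linarith
  set ε : ℝ := s - t with hε'
  have hε : 0 < ε := by rw [hε']; linarith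
  have hev : ∀ᶠ l in Filter.atTop, R l < t := by
    have hlt : Filter.limsup (fun l => ((R l : ℝ) : EReal)) Filter.atTop < (t : EReal) := by
      rw [← hα, ← hacoe]
      exact EReal.coe_lt_coe_iff.mpr hat
    filter_upwards [Filter.eventually_lt_of_limsup_lt hlt] with l hl
    exact EReal.coe_lt_coe_iff.mp hl
  have hsum := aux_summable v hv0 L K hL hK0 hLK ε hε
  refine summable_of_isBigO_nat hsum ?_
  rw [Asymptotics.isBigO_iff]
  refine ⟨1, ?_⟩
  filter_upwards [hev] with l hRl
  have hterm : ∀ x : S l, Real.exp (-(w l x) * s) ≤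
      Real.exp (-(w l x) * R l) * Real.exp (-(v l) * ε) := by
    intro x
    rw [← Real.exp_add, Real.exp_le_exp]
    have hwx : 0 ≤ w l x := (hv0 l).trans (hw l x)
    have hmul : v l * ε ≤ w l x * (s - R l) :=
      mul_le_mul (hw l x) (by rw [hε']; linarith) hε.le hwx
    nlinarith [hmul]
  have hfle : ∑ x : S l, Real.exp (-(w l x) * s) ≤ Real.exp (-(v l) * ε) := by
    calc ∑ x : S l, Real.exp (-(w l x) * s)
        ≤ ∑ x : S l, Real.exp (-(w l x) * R l) * Real.exp (-(v l) * ε) :=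
          Finset.sum_le_sum fun x _ => hterm x
      _ = (∑ x : S l, Real.exp (-(w l x) * R l)) * Real.exp (-(v l) * ε) :=
          (Finset.sum_mul _ _ _).symm
      _ = Real.exp (-(v l) * ε) := by rw [hR l, one_mul]
  have hfnn : 0 ≤ ∑ x : S l, Real.exp (-(w l x) * s) :=
    Finset.sum_nonneg fun x _ => (Real.exp_pos _).le
  rw [Real.norm_eq_abs, Real.norm_eq_abs, abs_of_nonneg hfnn,
    abs_of_pos (Real.exp_pos _), one_mul]
  exact hfle
end

section
/- Let (v_l)_{l≥1} be a strictly increasing sequence of nonnegative real numbers. For each l, let S_l be a nonempty finite set with weight function w_l : S_l → ℝ satisfying w_l(x) ≥ v_l for every x ∈ S_l, and let R_l be a real number satisfying ∑_{x∈S_l} e^{−w_l(x)·R_l} = 1. Let α be a real number and ε > 0, and suppose the set F = {l : R_l > α + ε} is finite. Define D = ∑_{l∈F} ∑_{x∈S_l} e^{−w_l(x)·(α+ε)}. Then for every n ≥ 1, ∑_{l=1}^n ∑_{x∈S_l} e^{−w_l(x)·(α+2ε)} ≤ ∑_{l=1}^n e^{−v_l·ε} + D. -/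
/-- Let `(v_l)` be a strictly increasing sequence of nonnegative reals.  For
each `l`, let `S l` be a nonempty finite set with weights `w l x ≥ v l`, and
let `R l` be the characteristic root of level `l`, i.e.
`∑_{x ∈ S l} e^(−w l x · R l) = 1`.  Let `α` be real, `ε > 0`, and suppose the
set `F = {l | R l > α + ε}` is finite.  With the correcting constant
`D = ∑_{l ∈ F} ∑_{x ∈ S l} e^(−w l x · (α+ε))`, for every `n ≥ 1`:
`∑_{l<n} ∑_{x ∈ S l} e^(−w l x · (α+2ε)) ≤ ∑_{l<n} e^(−v l · ε) + D`. -/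
theorem partialSum_le_notTooDense_sum_add_correction
    (v : ℕ → ℝ) (hv : StrictMono v) (hv0 : ∀ l, 0 ≤ v l)
    (S : ℕ → Type) [∀ l, Fintype (S l)] [∀ l, Nonempty (S l)]
    (w : ∀ l, S l → ℝ) (hw : ∀ l (x : S l), v l ≤ w l x)
    (R : ℕ → ℝ) (hR : ∀ l, ∑ x : S l, Real.exp (-(w l x) * R l) = 1)
    (α ε : ℝ) (hε : 0 < ε)
    (hF : {l : ℕ | α + ε < R l}.Finite) :
    ∀ n : ℕ, 1 ≤ n →
      ∑ l ∈ Finset.range n, ∑ x : S l, Real.exp (-(w l x) * (α + 2 * ε)) ≤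
        (∑ l ∈ Finset.range n, Real.exp (-(v l) * ε)) +
          ∑ l ∈ hF.toFinset, ∑ x : S l, Real.exp (-(w l x) * (α + ε)) := by
  intro n _
  classical
  have hw0 : ∀ l (x : S l), 0 ≤ w l x := fun l x => le_trans (hv0 l) (hw l x)
  -- bound for levels not in F
  have hnotF : ∀ l, ¬ (α + ε < R l) →
      ∑ x : S l, Real.exp (-(w l x) * (α + 2 * ε)) ≤ Real.exp (-(v l) * ε) := by
    intro l hl
    have hRl : R l ≤ α + ε := not_lt.1 hl
    calc ∑ x : S l, Real.exp (-(w l x) * (α + 2 * ε))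
        = ∑ x : S l, Real.exp (-(w l x) * (α + 2 * ε - R l)) * Real.exp (-(w l x) * R l) := by
          refine Finset.sum_congr rfl fun x _ => ?_
          rw [← Real.exp_add]; ring_nf
      _ ≤ ∑ x : S l, Real.exp (-(v l) * ε) * Real.exp (-(w l x) * R l) := by
          refine Finset.sum_le_sum fun x _ => ?_
          refine mul_le_mul_of_nonneg_right ?_ (Real.exp_pos _).le
          apply Real.exp_le_exp.2
          have h1 : ε ≤ α + 2 * ε - R l := by linarith
          calc -(w l x) * (α + 2 * ε - R l) ≤ -(v l) * (α + 2 * ε - R l) := by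
                apply mul_le_mul_of_nonneg_right (by linarith [hw l x]) (by linarith)
            _ ≤ -(v l) * ε := by
                have := hv0 l
                nlinarith
      _ = Real.exp (-(v l) * ε) := by rw [← Finset.mul_sum, hR l, mul_one]
  -- bound for levels in F
  have hinF : ∀ l,
      ∑ x : S l, Real.exp (-(w l x) * (α + 2 * ε)) ≤
        ∑ x : S l, Real.exp (-(w l x) * (α + ε)) := by
    intro l
    refine Finset.sum_le_sum fun x _ => ?_
    apply Real.exp_le_exp.2
    nlinarith [hw0 l x]
  set A := (Finset.range n).filter (fun l => α + ε < R l) with hA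
  set B := (Finset.range n).filter (fun l => ¬ (α + ε < R l)) with hB
  have hsplit : ∑ l ∈ Finset.range n, ∑ x : S l, Real.exp (-(w l x) * (α + 2 * ε))
      = (∑ l ∈ A, ∑ x : S l, Real.exp (-(w l x) * (α + 2 * ε)))
        + ∑ l ∈ B, ∑ x : S l, Real.exp (-(w l x) * (α + 2 * ε)) := by
    rw [hA, hB, Finset.sum_filter_add_sum_filter_not]
  rw [hsplit]
  have h1 : ∑ l ∈ B, ∑ x : S l, Real.exp (-(w l x) * (α + 2 * ε))
      ≤ ∑ l ∈ Finset.range n, Real.exp (-(v l) * ε) := by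
    calc ∑ l ∈ B, ∑ x : S l, Real.exp (-(w l x) * (α + 2 * ε))
        ≤ ∑ l ∈ B, Real.exp (-(v l) * ε) := by
          refine Finset.sum_le_sum fun l hl => ?_
          exact hnotF l (Finset.mem_filter.1 hl).2
      _ ≤ ∑ l ∈ Finset.range n, Real.exp (-(v l) * ε) := by
          apply Finset.sum_le_sum_of_subset_of_nonneg (Finset.filter_subset _ _)
          intro i _ _; exact (Real.exp_pos _).le
  have h2 : ∑ l ∈ A, ∑ x : S l, Real.exp (-(w l x) * (α + 2 * ε))
      ≤ ∑ l ∈ hF.toFinset, ∑ x : S l, Real.exp (-(w l x) * (α + ε)) := by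
    calc ∑ l ∈ A, ∑ x : S l, Real.exp (-(w l x) * (α + 2 * ε))
        ≤ ∑ l ∈ A, ∑ x : S l, Real.exp (-(w l x) * (α + ε)) :=
          Finset.sum_le_sum fun l _ => hinF l
      _ ≤ ∑ l ∈ hF.toFinset, ∑ x : S l, Real.exp (-(w l x) * (α + ε)) := by
          apply Finset.sum_le_sum_of_subset_of_nonneg
          · intro l hl
            simp only [Set.Finite.mem_toFinset, Set.mem_setOf_eq]
            exact (Finset.mem_filter.1 hl).2
          · intro i _ _
            exact Finset.sum_nonneg fun x _ => (Real.exp_pos _).le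
  linarith
end

section
/- Let A be a countable set with weight function w : A → ℝ, partitioned into pairwise disjoint nonempty finite levels S_1, S_2, … whose union is A. Let (v_l)_{l≥1} be a strictly increasing sequence of nonnegative reals that is not too dense, with w(a) ≥ v_l for every a ∈ S_l. Let (ω_k)_{k≥1} be a strictly increasing sequence of positive reals that is not too dense and enumerates the set {w(a) : a ∈ A} of attained weights, and suppose N(ω_k) := #{a ∈ A : w(a) = ω_k} is finite for every k. For each l, let R_l be a real number satisfying ∑_{x∈S_l} e^{−w(x)·R_l} = 1, and assume limsup_{l→∞} R_l is finite. Then limsup_{k→∞} (ln N(ω_k))/ω_k = limsup_{l→∞} R_l; that is, the combinatorial capacity of the channel equals its maximum entropy rate. -/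
open Filter Real

lemma NotTooDense.tendsto_atTop {a : ℕ → ℝ} (hm : Monotone a) (hd : NotTooDense a) :
    Tendsto a atTop atTop := by
  rw [Filter.tendsto_atTop]
  intro M
  obtain ⟨L, K, hL, hK, hb⟩ := hd
  obtain ⟨n, hn⟩ := exists_nat_ge M
  set k₀ := ⌈L * (n : ℝ) ^ K⌉₊ with hk₀
  have hkey : (n : ℝ) ≤ a k₀ := by
    by_contra h
    push_neg at h
    have h1 := hb k₀ n h
    have h2 : L * (n : ℝ) ^ K ≤ (k₀ : ℝ) := Nat.le_ceil _
    linarith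
  filter_upwards [eventually_ge_atTop k₀] with k hk
  exact hn.trans (hkey.trans (hm hk))

lemma NotTooDense.summable_exp {a : ℕ → ℝ} (h0 : ∀ k, 0 ≤ a k) (hd : NotTooDense a)
    {δ : ℝ} (hδ : 0 < δ) : Summable fun k => Real.exp (-(δ * a k)) := by
  obtain ⟨L, K, hL, hK, hb⟩ := hd
  set L' : ℝ := max L 1 with hL'def
  set K' : ℝ := max K 1 with hK'def
  have hL1 : 1 ≤ L' := le_max_right _ _
  have hK1 : 1 ≤ K' := le_max_right _ _
  have hK'pos : (0:ℝ) < K' := lt_of_lt_of_le one_pos hK1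
  -- lower bound on a k
  have hlow : ∀ k : ℕ, ((k + 1 : ℝ) / L') ^ (K'⁻¹) ≤ a k + 1 := by
    intro k
    set n : ℕ := ⌊a k⌋₊ + 1 with hn
    have hak : a k < n := by push_cast [hn]; exact Nat.lt_floor_add_one _
    have h1 : (k + 1 : ℝ) ≤ L * (n : ℝ) ^ K := hb k n hak
    have hn1 : (1:ℝ) ≤ (n:ℝ) := by exact_mod_cast Nat.one_le_iff_ne_zero.2 (by omega)
    have h2 : (n : ℝ) ^ K ≤ (n : ℝ) ^ K' := Real.rpow_le_rpow_of_exponent_le hn1 (le_max_left _ _)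
    have hnle : (n : ℝ) ≤ a k + 1 := by
      push_cast [hn]
      linarith [Nat.floor_le (h0 k)]
    have h3 : (n : ℝ) ^ K' ≤ (a k + 1) ^ K' := Real.rpow_le_rpow (by linarith) hnle hK'pos.le
    have h4 : (k + 1 : ℝ) ≤ L' * (a k + 1) ^ K' := by
      calc (k + 1 : ℝ) ≤ L * (n : ℝ) ^ K := h1
        _ ≤ L' * (n : ℝ) ^ K' := by
            apply mul_le_mul (le_max_left _ _) h2 (Real.rpow_nonneg (by linarith) _) (by linarith)
        _ ≤ L' * (a k + 1) ^ K' := by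
            apply mul_le_mul_of_nonneg_left h3 (by linarith)
    have h5 : (k + 1 : ℝ) / L' ≤ (a k + 1) ^ K' := by
      rw [div_le_iff₀ (by linarith)]; linarith [h4]
    calc ((k + 1 : ℝ) / L') ^ (K'⁻¹) ≤ ((a k + 1) ^ K') ^ (K'⁻¹) :=
          Real.rpow_le_rpow (by positivity) h5 (by positivity)
      _ = a k + 1 := Real.rpow_rpow_inv (by linarith [h0 k]) (ne_of_gt hK'pos)
  -- comparison with 1/(k+1)^2 after a shift
  set β : ℝ := K'⁻¹ with hβ
  have hβpos : 0 < β := by positivity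
  set m : ℕ := ⌈2 * K'⌉₊ with hm
  have hm2 : 2 ≤ β * m := by
    have h1 : 2 * K' ≤ (m : ℝ) := Nat.le_ceil _
    calc (2:ℝ) = K'⁻¹ * (2 * K') := by field_simp
      _ ≤ K'⁻¹ * m := by apply mul_le_mul_of_nonneg_left h1 (by positivity)
      _ = β * m := rfl
  set Cst : ℝ := Real.exp δ * ((m.factorial : ℝ) / δ ^ m) * L' ^ 2 with hCst
  have hCstpos : 0 < Cst := by
    have : (0:ℝ) < (m.factorial : ℝ) := by exact_mod_cast m.factorial_pos
    positivity
  set k₀ : ℕ := ⌈L'⌉₊ with hk₀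
  -- key pointwise bound for j with L' ≤ j + 1
  have hkey : ∀ j : ℕ, L' ≤ (j:ℝ) + 1 → Real.exp (-(δ * a j)) ≤ Cst * (1 / ((j:ℝ) + 1) ^ 2) := by
    intro j hj
    set u : ℝ := (((j:ℝ) + 1) / L') ^ β with hu
    have hq1 : (1:ℝ) ≤ ((j:ℝ) + 1) / L' := (one_le_div (by linarith)).2 hj
    have hu1 : (1:ℝ) ≤ u := Real.one_le_rpow hq1 hβpos.le
    have hupos : 0 < u := lt_of_lt_of_le one_pos hu1
    have hstep1 : Real.exp (-(δ * a j)) ≤ Real.exp δ * Real.exp (-(δ * u)) := by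
      rw [← Real.exp_add]
      apply Real.exp_le_exp.2
      have : u ≤ a j + 1 := hlow j
      nlinarith [hδ.le]
    have hpow : (δ * u) ^ m / (m.factorial : ℝ) ≤ Real.exp (δ * u) := by
      have h := Real.sum_le_exp_of_nonneg (x := δ * u) (by positivity) (m + 1)
      refine le_trans ?_ h
      have := Finset.single_le_sum (f := fun i => (δ * u) ^ i / (i.factorial : ℝ))
        (fun i _ => by positivity) (Finset.self_mem_range_succ m)
      simpa using this
    have hpowpos : (0:ℝ) < (δ * u) ^ m / (m.factorial : ℝ) := by positivity
    have hstep2 : Real.exp (-(δ * u)) ≤ (m.factorial : ℝ) / (δ * u) ^ m := by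
      rw [Real.exp_neg]
      calc (Real.exp (δ*u))⁻¹ ≤ ((δ * u) ^ m / (m.factorial : ℝ))⁻¹ :=
            inv_anti₀ hpowpos hpow
        _ = (m.factorial : ℝ) / (δ * u) ^ m := by rw [inv_div]
    have hum : ((j:ℝ)+1)^2 / L'^2 ≤ u ^ m := by
      have h1 : u ^ m = (((j:ℝ)+1)/L') ^ (β * (m:ℝ)) := by
        rw [hu, ← Real.rpow_natCast ((((j:ℝ)+1)/L') ^ β) m, ← Real.rpow_mul (by positivity)]
      have h2 : (((j:ℝ)+1)/L') ^ (2:ℝ) ≤ (((j:ℝ)+1)/L') ^ (β * (m:ℝ)) :=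
        Real.rpow_le_rpow_of_exponent_le hq1 hm2
      have h3 : (((j:ℝ)+1)/L') ^ (2:ℝ) = ((j:ℝ)+1)^2 / L'^2 := by
        rw [show (2:ℝ) = ((2:ℕ):ℝ) by norm_num, Real.rpow_natCast, div_pow]
      rw [h1]; rw [h3] at h2; exact h2
    have hupow_pos : (0:ℝ) < ((j:ℝ)+1)^2 / L'^2 := by positivity
    have hinv : 1 / u ^ m ≤ L'^2 / ((j:ℝ)+1)^2 := by
      have := one_div_le_one_div_of_le hupow_pos hum
      rwa [one_div_div] at this
    have hfinal : (m.factorial : ℝ) / (δ * u) ^ m ≤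
        ((m.factorial : ℝ)/δ^m) * (L'^2 / ((j:ℝ)+1)^2) := by
      calc (m.factorial : ℝ) / (δ*u)^m = ((m.factorial:ℝ)/δ^m) * (1 / u^m) := by
            rw [mul_pow]; field_simp
        _ ≤ ((m.factorial:ℝ)/δ^m) * (L'^2 / ((j:ℝ)+1)^2) := by
            apply mul_le_mul_of_nonneg_left hinv (by positivity)
    calc Real.exp (-(δ * a j)) ≤ Real.exp δ * Real.exp (-(δ * u)) := hstep1
      _ ≤ Real.exp δ * ((m.factorial:ℝ)/(δ*u)^m) :=
            mul_le_mul_of_nonneg_left hstep2 (Real.exp_pos _).le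
      _ ≤ Real.exp δ * (((m.factorial:ℝ)/δ^m) * (L'^2/((j:ℝ)+1)^2)) :=
            mul_le_mul_of_nonneg_left hfinal (Real.exp_pos _).le
      _ = Cst * (1/((j:ℝ)+1)^2) := by rw [hCst]; ring
  rw [← summable_nat_add_iff k₀]
  have hbase : Summable (fun k:ℕ => Cst * (1/((k:ℝ)+1)^2)) := by
    have h1 : Summable (fun n:ℕ => 1/(n:ℝ)^2) :=
      Real.summable_one_div_nat_pow.2 (by norm_num)
    have h2 := (summable_nat_add_iff (f := fun n:ℕ => 1/(n:ℝ)^2) 1).2 h1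
    have h3 : Summable (fun k:ℕ => 1/((k:ℝ)+1)^2) := by
      convert h2 using 2 with k
      · rfl
      · push_cast; ring
    exact h3.mul_left Cst
  apply Summable.of_nonneg_of_le (fun k => (Real.exp_pos _).le) _ hbase
  intro k
  have hL'k : L' ≤ ((k + k₀ : ℕ):ℝ) + 1 := by
    have h1 : L' ≤ (k₀:ℝ) := Nat.le_ceil _
    have h2 : (0:ℝ) ≤ (k:ℝ) := Nat.cast_nonneg k
    push_cast
    linarith
  refine (hkey (k + k₀) hL'k).trans ?_
  apply mul_le_mul_of_nonneg_left _ hCstpos.le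
  apply one_div_le_one_div_of_le (by positivity)
  have h5 : ((k:ℝ)+1) ≤ ((k+k₀:ℕ):ℝ)+1 := by
    have : (0:ℝ) ≤ (k₀:ℝ) := Nat.cast_nonneg k₀
    push_cast; linarith
  exact pow_le_pow_left₀ (by positivity) h5 2

lemma EReal.le_of_forall_coe_between {x y : EReal} (h : ∀ r : ℝ, y < (r:EReal) → x ≤ (r:EReal)) :
    x ≤ y := by
  by_contra hlt
  push_neg at hlt
  obtain ⟨r, h1, h2⟩ := EReal.exists_between_coe_real hlt
  exact absurd (h r h1) (not_le.2 h2)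

/-- Main theorem (Theorem 2 of the paper): for a general discrete noiseless
channel whose accepted strings `A` (a countable set with weight function `w`)
are partitioned into pairwise disjoint nonempty finite levels `S l` (the paths
of `l` branches of a tree representation), with `w a ≥ v l` on level `l` for a
strictly increasing, not too dense sequence `(v_l)` of nonnegative reals, and
whose distinct attained weights are enumerated by a strictly increasing, not
too dense sequence `(ω_k)` of positive reals with finite multiplicities
`N(ω_k) = #{a | w a = ω k}`, if each level `l` has a characteristic root `R l`
(`∑_{x ∈ S l} e^(−w x · R l) = 1`) and `limsup R l` is finite, then the
combinatorial capacity equals the maximum entropy rate: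
`limsup_k (ln N(ω_k)) / ω_k = limsup_l R l`. -/
theorem combinatorialCapacity_eq_maxEntropyRate
    (A : Type) [Countable A] (w : A → ℝ)
    (S : ℕ → Finset A) (hSne : ∀ l, (S l).Nonempty)
    (hSdisj : ∀ l m, l ≠ m → Disjoint (S l) (S m))
    (hScover : ∀ a : A, ∃ l, a ∈ S l)
    (v : ℕ → ℝ) (hv : StrictMono v) (hv0 : ∀ l, 0 ≤ v l) (hvd : NotTooDense v)
    (hwv : ∀ l, ∀ a ∈ S l, v l ≤ w a)
    (ω : ℕ → ℝ) (hω : StrictMono ω) (hωpos : ∀ k, 0 < ω k) (hωd : NotTooDense ω)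
    (hω_attained : ∀ k, ∃ a : A, w a = ω k)
    (hω_enum : ∀ a : A, ∃ k, w a = ω k)
    (hNfin : ∀ k, {a : A | w a = ω k}.Finite)
    (R : ℕ → ℝ) (hR : ∀ l, ∑ x ∈ S l, Real.exp (-(w x) * R l) = 1)
    (hRtop : Filter.limsup (fun l => ((R l : ℝ) : EReal)) Filter.atTop ≠ ⊤)
    (hRbot : Filter.limsup (fun l => ((R l : ℝ) : EReal)) Filter.atTop ≠ ⊥) :
    Filter.limsup
        (fun k => ((Real.log (Nat.card {a : A | w a = ω k}) / ω k : ℝ) : EReal))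
        Filter.atTop
      = Filter.limsup (fun l => ((R l : ℝ) : EReal)) Filter.atTop := by
  classical
  -- basic objects
  choose κ hκ using hω_enum
  choose lev hlev using hScover
  set N : ℕ → ℕ := fun k => Nat.card {a : A | w a = ω k} with hNdef
  set g : ℕ → ℝ := fun k => Real.log (N k) / ω k with hgdef
  set T : ℕ → Finset A := fun k => (hNfin k).toFinset with hTdef
  have hNT : ∀ k, N k = (T k).card := fun k => Nat.card_eq_card_finite_toFinset (hNfin k)
  have hmemT : ∀ k a, a ∈ T k ↔ w a = ω k := by
    intro k a
    simp [hTdef, Set.Finite.mem_toFinset]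
  have hN1 : ∀ k, 1 ≤ N k := by
    intro k
    obtain ⟨a, ha⟩ := hω_attained k
    rw [hNT]
    exact Finset.card_pos.2 ⟨a, (hmemT k a).2 ha⟩
  have hwpos : ∀ a : A, 0 < w a := fun a => (hκ a) ▸ hωpos (κ a)
  have hωtend : Filter.Tendsto ω Filter.atTop Filter.atTop :=
    hωd.tendsto_atTop hω.monotone
  have hvtend : Filter.Tendsto v Filter.atTop Filter.atTop :=
    hvd.tendsto_atTop hv.monotone
  -- antitonicity of level sums
  have hmono : ∀ l : ℕ, ∀ s t : ℝ, s ≤ t →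
      ∑ x ∈ S l, Real.exp (-(w x) * t) ≤ ∑ x ∈ S l, Real.exp (-(w x) * s) := by
    intro l s t hst
    apply Finset.sum_le_sum
    intro x hx
    apply Real.exp_le_exp.2
    have := (hwpos x).le
    nlinarith
  have hRle : ∀ l : ℕ, ∀ s : ℝ, (∑ x ∈ S l, Real.exp (-(w x) * s)) ≤ 1 → R l ≤ s := by
    intro l s hs
    by_contra hc
    push_neg at hc
    have hlt : ∑ x ∈ S l, Real.exp (-(w x) * R l) < ∑ x ∈ S l, Real.exp (-(w x) * s) := by
      apply Finset.sum_lt_sum_of_nonempty (hSne l)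
      intro x hx
      apply Real.exp_lt_exp.2
      nlinarith [hwpos x]
    rw [hR l] at hlt
    linarith
  -- part B : combinatorial capacity ≤ max entropy rate
  have partB : ∀ r : ℝ,
      Filter.limsup (fun l => ((R l : ℝ) : EReal)) Filter.atTop < (r : EReal) →
      Filter.limsup (fun k => ((g k : ℝ) : EReal)) Filter.atTop ≤ (r : EReal) := by
    intro r hr
    obtain ⟨r₀, hr₀1, hr₀2⟩ := EReal.exists_between_coe_real hr
    rw [EReal.coe_lt_coe_iff] at hr₀2
    set δ : ℝ := (r - r₀) / 2 with hδdef
    have hδ : 0 < δ := by simp only [hδdef]; linarith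
    -- eventually R l < r₀
    have h1 : ∀ᶠ l in Filter.atTop, R l < r₀ := by
      have := Filter.eventually_lt_of_limsup_lt hr₀1
      filter_upwards [this] with l hl
      exact_mod_cast hl
    obtain ⟨l₀, hl₀⟩ := Filter.eventually_atTop.1 h1
    -- level sums at r₀ are ≤ 1 for l ≥ l₀
    have hG : ∀ l, l₀ ≤ l → ∑ x ∈ S l, Real.exp (-(w x) * r₀) ≤ 1 := by
      intro l hl
      calc ∑ x ∈ S l, Real.exp (-(w x) * r₀)
          ≤ ∑ x ∈ S l, Real.exp (-(w x) * R l) := hmono l (R l) r₀ (hl₀ l hl).le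
        _ = 1 := hR l
    set F : ℕ → ℝ := fun l => ∑ x ∈ S l, Real.exp (-(w x) * (r₀ + δ)) with hFdef
    have hFnonneg : ∀ l, 0 ≤ F l := fun l =>
      Finset.sum_nonneg fun x _ => (Real.exp_pos _).le
    have hFsmall : ∀ l, l₀ ≤ l → F l ≤ Real.exp (-(δ * v l)) := by
      intro l hl
      have step : F l ≤ Real.exp (-(δ * v l)) * ∑ x ∈ S l, Real.exp (-(w x) * r₀) := by
        rw [Finset.mul_sum]
        apply Finset.sum_le_sum
        intro x hx
        rw [← Real.exp_add]
        apply Real.exp_le_exp.2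
        have h2 := hwv l x hx
        nlinarith [hδ]
      calc F l ≤ Real.exp (-(δ * v l)) * ∑ x ∈ S l, Real.exp (-(w x) * r₀) := step
        _ ≤ Real.exp (-(δ * v l)) * 1 :=
            mul_le_mul_of_nonneg_left (hG l hl) (Real.exp_pos _).le
        _ = Real.exp (-(δ * v l)) := mul_one _
    have hsum_v : Summable fun l => Real.exp (-(δ * v l)) := hvd.summable_exp hv0 hδ
    set D : ℝ := (∑ l ∈ Finset.range l₀, F l) + ∑' l, Real.exp (-(δ * v l)) with hDdef
    have hDpos : 0 < D := by
      have h2 : Real.exp (-(δ * v 0)) ≤ ∑' l, Real.exp (-(δ * v l)) :=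
        Summable.le_tsum hsum_v 0 fun i _ => (Real.exp_pos _).le
      have h3 : 0 ≤ ∑ l ∈ Finset.range l₀, F l := Finset.sum_nonneg fun l _ => hFnonneg l
      have := Real.exp_pos (-(δ * v 0))
      simp only [hDdef]
      linarith
    -- key bound : N k · e^{-ω k (r₀+δ)} ≤ D
    have hkey : ∀ k : ℕ, (N k : ℝ) * Real.exp (-(ω k * (r₀ + δ))) ≤ D := by
      intro k
      set m : ℕ := (T k).sup lev + 1 with hmdef
      have hsub : T k ⊆ (Finset.range m).biUnion S := by
        intro a ha
        rw [Finset.mem_biUnion]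
        exact ⟨lev a, Finset.mem_range.2 (Nat.lt_succ_of_le (Finset.le_sup ha)), hlev a⟩
      have heq : (N k : ℝ) * Real.exp (-(ω k * (r₀ + δ)))
          = ∑ a ∈ T k, Real.exp (-(w a) * (r₀ + δ)) := by
        rw [hNT]
        rw [Finset.sum_congr rfl fun a ha => by
          rw [(hmemT k a).1 ha, neg_mul]]
        rw [Finset.sum_const, nsmul_eq_mul]
      rw [heq]
      calc ∑ a ∈ T k, Real.exp (-(w a) * (r₀ + δ))
          ≤ ∑ a ∈ (Finset.range m).biUnion S, Real.exp (-(w a) * (r₀ + δ)) :=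
            Finset.sum_le_sum_of_subset_of_nonneg hsub fun a _ _ => (Real.exp_pos _).le
        _ = ∑ l ∈ Finset.range m, F l := by
            rw [Finset.sum_biUnion]
            intro i _ j _ hij
            exact hSdisj i j hij
        _ ≤ ∑ l ∈ Finset.range m,
              ((if l < l₀ then F l else 0) + Real.exp (-(δ * v l))) := by
            apply Finset.sum_le_sum
            intro l _
            by_cases hc : l < l₀
            · simp only [hc, if_true]
              linarith [Real.exp_pos (-(δ * v l))]
            · simp only [hc, if_false, zero_add]
              exact hFsmall l (not_lt.1 hc)
        _ = (∑ l ∈ Finset.range m, (if l < l₀ then F l else 0))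
              + ∑ l ∈ Finset.range m, Real.exp (-(δ * v l)) := Finset.sum_add_distrib
        _ ≤ D := by
            apply add_le_add
            · rw [← Finset.sum_filter]
              apply Finset.sum_le_sum_of_subset_of_nonneg
              · intro l hl
                rw [Finset.mem_filter] at hl
                exact Finset.mem_range.2 hl.2
              · exact fun l _ _ => hFnonneg l
            · exact Summable.sum_le_tsum _ (fun l _ => (Real.exp_pos _).le) hsum_v
    -- convert to a bound on g k, eventually
    have hglek : ∀ k : ℕ, g k ≤ Real.log D / ω k + (r₀ + δ) := by
      intro k
      have hk := hkey k
      have hNlog : Real.log (N k) ≤ Real.log D + ω k * (r₀ + δ) := by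
        have hNb : (N k : ℝ) ≤ D * Real.exp (ω k * (r₀ + δ)) := by
          have := mul_le_mul_of_nonneg_right hk (Real.exp_pos (ω k * (r₀ + δ))).le
          rwa [mul_assoc, ← Real.exp_add, neg_add_cancel, Real.exp_zero, mul_one] at this
        calc Real.log (N k) ≤ Real.log (D * Real.exp (ω k * (r₀ + δ))) := by
              apply Real.log_le_log (by exact_mod_cast Nat.lt_of_lt_of_le Nat.zero_lt_one (hN1 k)) hNb
          _ = Real.log D + ω k * (r₀ + δ) := by
              rw [Real.log_mul (ne_of_gt hDpos) (ne_of_gt (Real.exp_pos _)), Real.log_exp]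
      have hωk := hωpos k
      rw [hgdef]
      rw [div_add' _ _ _ (ne_of_gt hωk)] at *
      rw [div_le_div_iff₀ hωk hωk]
      nlinarith [hNlog]
    have hev : ∀ᶠ k in Filter.atTop, g k ≤ r := by
      have hev2 : ∀ᶠ k in Filter.atTop, |Real.log D| / δ + 1 ≤ ω k :=
        hωtend.eventually_ge_atTop _
      filter_upwards [hev2] with k hk
      have hωk := hωpos k
      have habs : 0 ≤ |Real.log D| := abs_nonneg _
      have hlogD : Real.log D / ω k ≤ δ := by
        rw [div_le_iff₀ hωk]
        have h6 : δ * (|Real.log D| / δ + 1) = |Real.log D| + δ := by field_simp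
        have h7 : δ * (|Real.log D| / δ + 1) ≤ δ * ω k :=
          mul_le_mul_of_nonneg_left hk hδ.le
        have h8 := le_abs_self (Real.log D)
        linarith
      have := hglek k
      have : g k ≤ δ + (r₀ + δ) := by linarith
      simp only [hδdef] at this ⊢
      linarith
    exact Filter.limsup_le_of_le Filter.isCobounded_le_of_bot
      (by filter_upwards [hev] with k hk; exact EReal.coe_le_coe_iff.2 hk)
  -- part A : max entropy rate ≤ combinatorial capacity
  have partA : ∀ r : ℝ,
      Filter.limsup (fun k => ((g k : ℝ) : EReal)) Filter.atTop < (r : EReal) →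
      Filter.limsup (fun l => ((R l : ℝ) : EReal)) Filter.atTop ≤ (r : EReal) := by
    intro r hr
    obtain ⟨r₀, hr₀1, hr₀2⟩ := EReal.exists_between_coe_real hr
    rw [EReal.coe_lt_coe_iff] at hr₀2
    set δ : ℝ := r - r₀ with hδdef
    have hδ : 0 < δ := by simp only [hδdef]; linarith
    have hδ2 : 0 < δ / 2 := by linarith
    have h1 : ∀ᶠ k in Filter.atTop, g k < r₀ := by
      have := Filter.eventually_lt_of_limsup_lt hr₀1
      filter_upwards [this] with k hk
      exact_mod_cast hk
    obtain ⟨k₀, hk₀⟩ := Filter.eventually_atTop.1 h1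
    set B : ℝ := 1 + ∑ k ∈ Finset.range k₀, (N k : ℝ) * Real.exp (-(ω k * r₀)) with hBdef
    have hB1 : 1 ≤ B := by
      have h0 : 0 ≤ ∑ k ∈ Finset.range k₀, (N k : ℝ) * Real.exp (-(ω k * r₀)) :=
        Finset.sum_nonneg fun k _ => by positivity
      simp only [hBdef]; linarith
    have hNB : ∀ k, (N k : ℝ) ≤ B * Real.exp (ω k * r₀) := by
      intro k
      by_cases hc : k₀ ≤ k
      · have h2 : g k < r₀ := hk₀ k hc
        have hωk := hωpos k
        have hNpos : (0:ℝ) < (N k : ℝ) := by exact_mod_cast hN1 k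
        simp only [hgdef] at h2
        rw [div_lt_iff₀ hωk] at h2
        have h3 : Real.log (N k) < ω k * r₀ := by rw [mul_comm]; exact h2
        have h4 : (N k:ℝ) ≤ Real.exp (ω k * r₀) := by
          rw [← Real.exp_log hNpos]
          exact Real.exp_le_exp.2 h3.le
        calc (N k:ℝ) ≤ Real.exp (ω k * r₀) := h4
          _ ≤ B * Real.exp (ω k * r₀) := le_mul_of_one_le_left (Real.exp_pos _).le hB1
      · push_neg at hc
        have hterm : (N k : ℝ) * Real.exp (-(ω k * r₀)) ≤ B := by
          have h5 : (N k:ℝ) * Real.exp (-(ω k * r₀)) ≤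
              ∑ j ∈ Finset.range k₀, (N j : ℝ) * Real.exp (-(ω j * r₀)) :=
            Finset.single_le_sum (f := fun j => (N j : ℝ) * Real.exp (-(ω j * r₀)))
              (fun j _ => by positivity) (Finset.mem_range.2 hc)
          simp only [hBdef]; linarith
        have h6 := mul_le_mul_of_nonneg_right hterm (Real.exp_pos (ω k * r₀)).le
        rwa [mul_assoc, ← Real.exp_add, neg_add_cancel, Real.exp_zero, mul_one] at h6
    have hsum_ω : Summable fun k => Real.exp (-(δ/2 * ω k)) :=
      hωd.summable_exp (fun k => (hωpos k).le) hδ2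
    set M : ℝ := B * ∑' k, Real.exp (-(δ/2 * ω k)) with hMdef
    have hMpos : 0 < M := by
      have h2 : Real.exp (-(δ/2 * ω 0)) ≤ ∑' k, Real.exp (-(δ/2 * ω k)) :=
        Summable.le_tsum hsum_ω 0 fun i _ => (Real.exp_pos _).le
      have h3 := Real.exp_pos (-(δ/2 * ω 0))
      have h4 : 0 < ∑' k, Real.exp (-(δ/2 * ω k)) := lt_of_lt_of_le h3 h2
      simp only [hMdef]
      nlinarith
    have hH : ∀ l : ℕ, ∑ x ∈ S l, Real.exp (-(w x) * (r₀ + δ/2)) ≤ M := by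
      intro l
      have hfib := Finset.sum_fiberwise_of_maps_to
        (t := (S l).image κ) (g := κ) (s := S l)
        (fun x hx => Finset.mem_image_of_mem κ hx)
        (fun x => Real.exp (-(w x) * (r₀ + δ/2)))
      rw [← hfib]
      have hinner : ∀ j ∈ (S l).image κ,
          ∑ x ∈ (S l).filter (fun x => κ x = j), Real.exp (-(w x) * (r₀ + δ/2))
            ≤ (N j : ℝ) * Real.exp (-(ω j * (r₀ + δ/2))) := by
        intro j hj
        have hcard : ((S l).filter (fun x => κ x = j)).card ≤ N j := by
          rw [hNT]
          apply Finset.card_le_card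
          intro x hx
          rw [Finset.mem_filter] at hx
          rw [hmemT, ← hx.2]
          exact hκ x
        calc ∑ x ∈ (S l).filter (fun x => κ x = j), Real.exp (-(w x) * (r₀ + δ/2))
            = (((S l).filter (fun x => κ x = j)).card : ℝ) * Real.exp (-(ω j * (r₀ + δ/2))) := by
              rw [Finset.sum_congr rfl fun x hx => ?_, Finset.sum_const, nsmul_eq_mul]
              rw [Finset.mem_filter] at hx
              rw [hκ x, hx.2, neg_mul]
          _ ≤ (N j : ℝ) * Real.exp (-(ω j * (r₀ + δ/2))) := by
              apply mul_le_mul_of_nonneg_right _ (Real.exp_pos _).le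
              exact_mod_cast hcard
      calc ∑ j ∈ (S l).image κ, ∑ x ∈ (S l).filter (fun x => κ x = j),
            Real.exp (-(w x) * (r₀ + δ/2))
          ≤ ∑ j ∈ (S l).image κ, (N j : ℝ) * Real.exp (-(ω j * (r₀ + δ/2))) :=
            Finset.sum_le_sum hinner
        _ ≤ ∑ j ∈ (S l).image κ, B * Real.exp (-(δ/2 * ω j)) := by
            apply Finset.sum_le_sum
            intro j _
            have h7 := mul_le_mul_of_nonneg_right (hNB j) (Real.exp_pos (-(ω j * (r₀ + δ/2)))).le
            calc (N j : ℝ) * Real.exp (-(ω j * (r₀ + δ/2)))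
                ≤ B * Real.exp (ω j * r₀) * Real.exp (-(ω j * (r₀ + δ/2))) := h7
              _ = B * Real.exp (-(δ/2 * ω j)) := by
                  rw [mul_assoc, ← Real.exp_add]
                  congr 2
                  ring
        _ ≤ M := by
            rw [← Finset.mul_sum, hMdef]
            apply mul_le_mul_of_nonneg_left _ (by linarith)
            exact Summable.sum_le_tsum _ (fun k _ => (Real.exp_pos _).le) hsum_ω
    have hev : ∀ᶠ l in Filter.atTop, R l ≤ r := by
      have hev2 : ∀ᶠ l in Filter.atTop, 2 * |Real.log M| / δ ≤ v l :=
        hvtend.eventually_ge_atTop _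
      filter_upwards [hev2] with l hl
      have hsum1 : ∑ x ∈ S l, Real.exp (-(w x) * (r₀ + δ)) ≤ 1 := by
        have step : ∑ x ∈ S l, Real.exp (-(w x) * (r₀ + δ)) ≤
            Real.exp (-(δ/2 * v l)) * ∑ x ∈ S l, Real.exp (-(w x) * (r₀ + δ/2)) := by
          rw [Finset.mul_sum]
          apply Finset.sum_le_sum
          intro x hx
          rw [← Real.exp_add]
          apply Real.exp_le_exp.2
          have h2 := hwv l x hx
          nlinarith [hδ2]
        have hexpM : Real.exp (-(δ/2 * v l)) * M ≤ 1 := by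
          rw [show M = Real.exp (Real.log M) from (Real.exp_log hMpos).symm, ← Real.exp_add]
          have h3 : -(δ/2 * v l) + Real.log M ≤ 0 := by
            have h4 := le_abs_self (Real.log M)
            have h5 : δ/2 * (2 * |Real.log M| / δ) ≤ δ/2 * v l :=
              mul_le_mul_of_nonneg_left hl (by linarith)
            have h6 : δ/2 * (2 * |Real.log M| / δ) = |Real.log M| := by
              field_simp
            linarith
          calc Real.exp (-(δ/2 * v l) + Real.log M) ≤ Real.exp 0 := Real.exp_le_exp.2 h3
            _ = 1 := Real.exp_zero
        calc ∑ x ∈ S l, Real.exp (-(w x) * (r₀ + δ)) ≤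
            Real.exp (-(δ/2 * v l)) * ∑ x ∈ S l, Real.exp (-(w x) * (r₀ + δ/2)) := step
          _ ≤ Real.exp (-(δ/2 * v l)) * M :=
              mul_le_mul_of_nonneg_left (hH l) (Real.exp_pos _).le
          _ ≤ 1 := hexpM
      have h8 := hRle l (r₀ + δ) hsum1
      simp only [hδdef] at h8
      linarith
    exact Filter.limsup_le_of_le Filter.isCobounded_le_of_bot
      (by filter_upwards [hev] with l hl; exact EReal.coe_le_coe_iff.2 hl)
  exact le_antisymm (EReal.le_of_forall_coe_between partB) (EReal.le_of_forall_coe_between partA)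
end
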